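/- Let F : ℝ² → ℝ be three times continuously differentiable and satisfy the Monge–Ampère equation F₁₁F₂₂ − F₁₂² = 1, where subscripts denote partial derivatives with respect to x¹ and x². Then the gradient graph (x¹, x², F₁(x¹,x²), F₂(x¹,x²)) in ℝ⁴ satisfies the minimal surface equations: g₂₂ f^k₁₁ + g₁₁ f^k₂₂ − 2 g₁₂ f^k₁₂ = 0 for f¹ = F₁, f² = F₂ and k = 1, 2. (Such gradient graphs are special Lagrangian surfaces of phase π/2 in ℝ⁴ = ℂ² with complex coordinates z = x¹ + iF₁, w = x² + iF₂, and are therefore minimal.) -/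

import Mathlib

/-!
Write `a = F₁₁`, `b = F₁₂`, `c = F₂₂`. Differentiating `a c - b² = 1` in `xⁱ` gives
`aᵢ c + a cᵢ - 2 b bᵢ = 0`, and after using the symmetry of third derivatives of `F`, each
minimal surface equation is the identity
`(1 + b² + c²) a' + (1 + a² + b²) c' - 2 (a + c) b b'
  = (a + c) (a' c + a c' - 2 b b') - (a' + c') (a c - b² - 1)`
with `(a', b', c') = (aᵢ, bᵢ, cᵢ)`.
-/

noncomputable section

/-- Partial derivative in the first variable. -/
def pd1 (F : ℝ → ℝ → ℝ) (u v : ℝ) : ℝ := deriv (fun x => F x v) u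

/-- Partial derivative in the second variable. -/
def pd2 (F : ℝ → ℝ → ℝ) (u v : ℝ) : ℝ := deriv (fun y => F u y) v

/-- The minimal surface equations for the graph `(u, v, F1(u,v), F2(u,v)) ⊂ ℝ⁴`. -/
def MinimalGraphEq (F1 F2 : ℝ → ℝ → ℝ) (u v : ℝ) : Prop :=
  ((1 + (pd2 F1 u v) ^ 2 + (pd2 F2 u v) ^ 2) * pd1 (pd1 F1) u v
    + (1 + (pd1 F1 u v) ^ 2 + (pd1 F2 u v) ^ 2) * pd2 (pd2 F1) u v
    - 2 * (pd1 F1 u v * pd2 F1 u v + pd1 F2 u v * pd2 F2 u v) * pd1 (pd2 F1) u v = 0) ∧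
  ((1 + (pd2 F1 u v) ^ 2 + (pd2 F2 u v) ^ 2) * pd1 (pd1 F2) u v
    + (1 + (pd1 F1 u v) ^ 2 + (pd1 F2 u v) ^ 2) * pd2 (pd2 F2) u v
    - 2 * (pd1 F1 u v * pd2 F1 u v + pd1 F2 u v * pd2 F2 u v) * pd1 (pd2 F2) u v = 0)

open Function

section PartialDerivatives

variable {F : ℝ → ℝ → ℝ} {u v : ℝ}

lemma hasDerivAt_fderiv_apply_fst (h : DifferentiableAt ℝ (uncurry F) (u, v)) :
    HasDerivAt (fun x => F x v) (fderiv ℝ (uncurry F) (u, v) (1, 0)) u :=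
  h.hasFDerivAt.comp_hasDerivAt (f := fun x => (x, v)) u
    ((hasDerivAt_id' u).prodMk (hasDerivAt_const u v))

lemma hasDerivAt_fderiv_apply_snd (h : DifferentiableAt ℝ (uncurry F) (u, v)) :
    HasDerivAt (fun y => F u y) (fderiv ℝ (uncurry F) (u, v) (0, 1)) v :=
  h.hasFDerivAt.comp_hasDerivAt (f := fun y => (u, y)) v
    ((hasDerivAt_const v u).prodMk (hasDerivAt_id' v))

lemma pd1_eq_fderiv (h : DifferentiableAt ℝ (uncurry F) (u, v)) :
    pd1 F u v = fderiv ℝ (uncurry F) (u, v) (1, 0) :=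
  (hasDerivAt_fderiv_apply_fst h).deriv

lemma pd2_eq_fderiv (h : DifferentiableAt ℝ (uncurry F) (u, v)) :
    pd2 F u v = fderiv ℝ (uncurry F) (u, v) (0, 1) :=
  (hasDerivAt_fderiv_apply_snd h).deriv

lemma hasDerivAt_pd1 (h : DifferentiableAt ℝ (uncurry F) (u, v)) :
    HasDerivAt (fun x => F x v) (pd1 F u v) u :=
  pd1_eq_fderiv h ▸ hasDerivAt_fderiv_apply_fst h

lemma hasDerivAt_pd2 (h : DifferentiableAt ℝ (uncurry F) (u, v)) :
    HasDerivAt (fun y => F u y) (pd2 F u v) v :=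
  pd2_eq_fderiv h ▸ hasDerivAt_fderiv_apply_snd h

lemma uncurry_pd1_eq_fderiv (h : Differentiable ℝ (uncurry F)) :
    uncurry (pd1 F) = fun p => fderiv ℝ (uncurry F) p (1, 0) :=
  funext fun _ => pd1_eq_fderiv (h _)

lemma uncurry_pd2_eq_fderiv (h : Differentiable ℝ (uncurry F)) :
    uncurry (pd2 F) = fun p => fderiv ℝ (uncurry F) p (0, 1) :=
  funext fun _ => pd2_eq_fderiv (h _)

variable {m n : WithTop ℕ∞}

lemma ContDiff.uncurry_pd1 (hF : ContDiff ℝ n (uncurry F)) (hmn : m + 1 ≤ n) :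
    ContDiff ℝ m (uncurry (pd1 F)) := by
  rw [uncurry_pd1_eq_fderiv (hF.differentiable (ne_bot_of_le_ne_bot (by simp) hmn))]
  exact (hF.fderiv_right hmn).clm_apply contDiff_const

lemma ContDiff.uncurry_pd2 (hF : ContDiff ℝ n (uncurry F)) (hmn : m + 1 ≤ n) :
    ContDiff ℝ m (uncurry (pd2 F)) := by
  rw [uncurry_pd2_eq_fderiv (hF.differentiable (ne_bot_of_le_ne_bot (by simp) hmn))]
  exact (hF.fderiv_right hmn).clm_apply contDiff_const

lemma fderiv_fderiv_apply {𝕜 E V : Type*} [NontriviallyNormedField 𝕜] [NormedAddCommGroup E]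
    [NormedSpace 𝕜 E] [NormedAddCommGroup V] [NormedSpace 𝕜 V] {G : E → V} {p w z : E}
    (h : DifferentiableAt 𝕜 (fderiv 𝕜 G) p) :
    fderiv 𝕜 (fun q => fderiv 𝕜 G q w) p z = fderiv 𝕜 (fderiv 𝕜 G) p z w := by
  rw [(h.hasFDerivAt.clm_apply (hasFDerivAt_const w p)).fderiv]
  simp

lemma pd2_pd1_comm (hF : ContDiff ℝ 2 (uncurry F)) : pd2 (pd1 F) = pd1 (pd2 F) := by
  have hD : Differentiable ℝ (fderiv ℝ (uncurry F)) :=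
    (hF.fderiv_right (m := 1) (by norm_num)).differentiable one_ne_zero
  have h1 := (hF.uncurry_pd1 (m := 1) (by norm_num)).differentiable one_ne_zero
  have h2 := (hF.uncurry_pd2 (m := 1) (by norm_num)).differentiable one_ne_zero
  have hF' := hF.differentiable two_ne_zero
  ext u v
  rw [pd2_eq_fderiv (h1 _), pd1_eq_fderiv (h2 _), uncurry_pd1_eq_fderiv hF',
    uncurry_pd2_eq_fderiv hF', fderiv_fderiv_apply (hD _), fderiv_fderiv_apply (hD _),
    (hF.contDiffAt.isSymmSndFDerivAt (by simp)) (0, 1) (1, 0)]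

end PartialDerivatives

lemma mul_sub_sq_deriv_eq_zero {f g h : ℝ → ℝ} {f' g' h' t c : ℝ} (hf : HasDerivAt f f' t)
    (hg : HasDerivAt g g' t) (hh : HasDerivAt h h' t) (hc : ∀ s, f s * g s - h s ^ 2 = c) :
    f' * g t + f t * g' - 2 * h t * h' = 0 := by
  have hd : HasDerivAt (fun s => f s * g s - h s ^ 2) _ t := (hf.mul hg).sub (hh.pow 2)
  rw [show (fun s => f s * g s - h s ^ 2) = fun _ => c from funext hc] at hd
  simpa using hd.unique (hasDerivAt_const t c)

lemma minimal_surface_identity {a b c a' b' c' : ℝ} (h : a * c - b ^ 2 = 1)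
    (h' : a' * c + a * c' - 2 * b * b' = 0) :
    (1 + b ^ 2 + c ^ 2) * a' + (1 + a ^ 2 + b ^ 2) * c' - 2 * (a * b + b * c) * b' = 0 := by
  linear_combination (a + c) * h' - (a' + c') * h

/-- if `F` is C³ and solves the Monge–Ampère equation
`F₁₁F₂₂ − F₁₂² = 1`, then the gradient graph `(x¹, x², F₁, F₂)` (a special
Lagrangian surface of phase `π/2` in `ℂ²`) satisfies the minimal surface
equations. -/
theorem stmt18 (F : ℝ → ℝ → ℝ)
    (hF : ContDiff ℝ 3 (fun p : ℝ × ℝ => F p.1 p.2))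
    (hMA : ∀ x y : ℝ,
      pd1 (pd1 F) x y * pd2 (pd2 F) x y - (pd1 (pd2 F) x y) ^ 2 = 1)
    (x y : ℝ) :
    MinimalGraphEq (pd1 F) (pd2 F) x y := by
  have hF : ContDiff ℝ 3 (uncurry F) := hF
  have h1 : ContDiff ℝ 2 (uncurry (pd1 F)) := hF.uncurry_pd1 (by norm_num)
  have h2 : ContDiff ℝ 2 (uncurry (pd2 F)) := hF.uncurry_pd2 (by norm_num)
  have h11 : Differentiable ℝ (uncurry (pd1 (pd1 F))) :=
    (h1.uncurry_pd1 le_rfl).differentiable one_ne_zero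
  have h12 : Differentiable ℝ (uncurry (pd1 (pd2 F))) :=
    (h2.uncurry_pd1 le_rfl).differentiable one_ne_zero
  have h22 : Differentiable ℝ (uncurry (pd2 (pd2 F))) :=
    (h2.uncurry_pd2 le_rfl).differentiable one_ne_zero
  have hx := mul_sub_sq_deriv_eq_zero (hasDerivAt_pd1 (h11 (x, y))) (hasDerivAt_pd1 (h22 (x, y)))
    (hasDerivAt_pd1 (h12 (x, y))) (fun s => hMA s y)
  have hy := mul_sub_sq_deriv_eq_zero (hasDerivAt_pd2 (h11 (x, y))) (hasDerivAt_pd2 (h22 (x, y)))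
    (hasDerivAt_pd2 (h12 (x, y))) (fun s => hMA x s)
  have hsymm : pd2 (pd1 F) = pd1 (pd2 F) := pd2_pd1_comm (hF.of_le (by norm_num))
  rw [pd2_pd1_comm h1, hsymm, pd2_pd1_comm h2] at hy
  rw [MinimalGraphEq, hsymm, pd2_pd1_comm h2]
  exact ⟨minimal_surface_identity (hMA x y) hx, minimal_surface_identity (hMA x y) hy⟩
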